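/- arXiv:0906.4519 — 4 statements merged into one kernel-verified Lean document; each statement's English description precedes it below -/
import Mathlib

section
/- If a connected colored graph Γ weakly covers each graph in a collection {Γ_i}, then all the Γ_i weakly cover some common colored graph Γ'. -/
/-- A colored graph: a symmetric adjacency relation together with a vertex coloring. -/
structure CGraph (V : Type) (C : Type) where
  Adj : V → V → Prop
  symm : ∀ {v w}, Adj v w → Adj w v
  color : V → C

/-- A weak covering of colored graphs: a color-preserving graph homomorphism such that
every edge at the image of `v` lifts to an edge at `v`. -/
def IsWeakCovering {V V' C : Type} (Γ : CGraph V C) (Γ' : CGraph V' C) (f : V → V') : Prop :=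
  (∀ v, Γ'.color (f v) = Γ.color v) ∧
  (∀ ⦃v w⦄, Γ.Adj v w → Γ'.Adj (f v) (f w)) ∧
  (∀ v w', Γ'.Adj (f v) w' → ∃ w, Γ.Adj v w ∧ f w = w')

/-- Connectedness: the graph is nonempty and any two vertices are joined by an edge path. -/
def CGraph.Connected {V C : Type} (Γ : CGraph V C) : Prop :=
  Nonempty V ∧ ∀ v w : V, Relation.ReflTransGen Γ.Adj v w

/-- if a connected colored graph `Γ` weakly covers each member of a family
`{Γᵢ}`, then all the `Γᵢ` weakly cover some common colored graph `Γ'`. -/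
theorem common_weak_quotient {V C : Type} {ι : Type} (Γ : CGraph V C)
    (hΓ : Γ.Connected) (W : ι → Type) (Γi : ∀ i, CGraph (W i) C)
    (f : ∀ i, V → W i) (hf : ∀ i, IsWeakCovering Γ (Γi i) (f i)) :
    ∃ (V' : Type) (Γ' : CGraph V' C) (g : ∀ i, W i → V'),
      ∀ i, IsWeakCovering (Γi i) Γ' (g i) := by
  classical
  set S := Σ i, W i with hS
  -- generator relation: identify f i v with f j v
  set r : S → S → Prop :=
    fun a b => ∃ v i j, a = ⟨i, f i v⟩ ∧ b = ⟨j, f j v⟩ with hr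
  -- key lemma: Relation.EqvGen r preserves colors and has edge-transfer in both directions
  have key : ∀ a b : S, Relation.EqvGen r a b →
      ((Γi a.1).color a.2 = (Γi b.1).color b.2) ∧
      (∀ y₂, (Γi b.1).Adj b.2 y₂ → ∃ x₂, (Γi a.1).Adj a.2 x₂ ∧
        Relation.EqvGen r ⟨a.1, x₂⟩ ⟨b.1, y₂⟩) ∧
      (∀ x₂, (Γi a.1).Adj a.2 x₂ → ∃ y₂, (Γi b.1).Adj b.2 y₂ ∧
        Relation.EqvGen r ⟨a.1, x₂⟩ ⟨b.1, y₂⟩) := by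
    intro a b h
    induction h with
    | rel a b hab =>
      obtain ⟨v, i, j, rfl, rfl⟩ := hab
      refine ⟨?_, ?_, ?_⟩
      · rw [(hf i).1 v, (hf j).1 v]
      · intro y₂ hy₂
        obtain ⟨w, hw, hfw⟩ := (hf j).2.2 v y₂ hy₂
        exact ⟨f i w, (hf i).2.1 hw, hfw ▸ Relation.EqvGen.rel _ _ ⟨w, i, j, rfl, rfl⟩⟩
      · intro x₂ hx₂
        obtain ⟨w, hw, hfw⟩ := (hf i).2.2 v x₂ hx₂
        exact ⟨f j w, (hf j).2.1 hw, hfw ▸ Relation.EqvGen.rel _ _ ⟨w, i, j, rfl, rfl⟩⟩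
    | refl a =>
      exact ⟨rfl, fun y₂ hy₂ => ⟨y₂, hy₂, Relation.EqvGen.refl _⟩,
        fun x₂ hx₂ => ⟨x₂, hx₂, Relation.EqvGen.refl _⟩⟩
    | symm a b _ ih =>
      obtain ⟨hc, h1, h2⟩ := ih
      refine ⟨hc.symm, ?_, ?_⟩
      · intro y₂ hy₂
        obtain ⟨x₂, hx₂, he⟩ := h2 y₂ hy₂
        exact ⟨x₂, hx₂, he.symm _ _⟩
      · intro x₂ hx₂
        obtain ⟨y₂, hy₂, he⟩ := h1 x₂ hx₂
        exact ⟨y₂, hy₂, he.symm _ _⟩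
    | trans a b c _ _ ih₁ ih₂ =>
      obtain ⟨hc₁, h1₁, h2₁⟩ := ih₁
      obtain ⟨hc₂, h1₂, h2₂⟩ := ih₂
      refine ⟨hc₁.trans hc₂, ?_, ?_⟩
      · intro y₂ hy₂
        obtain ⟨z₂, hz₂, he₂⟩ := h1₂ y₂ hy₂
        obtain ⟨x₂, hx₂, he₁⟩ := h1₁ z₂ hz₂
        exact ⟨x₂, hx₂, he₁.trans _ _ _ he₂⟩
      · intro x₂ hx₂
        obtain ⟨z₂, hz₂, he₁⟩ := h2₁ x₂ hx₂
        obtain ⟨y₂, hy₂, he₂⟩ := h2₂ z₂ hz₂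
        exact ⟨y₂, hy₂, he₁.trans _ _ _ he₂⟩
  -- the quotient graph
  let V' := Quot r
  have colorw : ∀ a b : S, r a b → (Γi a.1).color a.2 = (Γi b.1).color b.2 := by
    rintro a b ⟨v, i, j, rfl, rfl⟩
    rw [(hf i).1 v, (hf j).1 v]
  let Γ' : CGraph V' C :=
    { Adj := fun q q' => ∃ (i : ι) (x y : W i), (Γi i).Adj x y ∧
        q = Quot.mk r ⟨i, x⟩ ∧ q' = Quot.mk r ⟨i, y⟩
      symm := by
        rintro q q' ⟨i, x, y, hxy, rfl, rfl⟩
        exact ⟨i, y, x, (Γi i).symm hxy, rfl, rfl⟩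
      color := Quot.lift (fun a : S => (Γi a.1).color a.2) colorw }
  refine ⟨V', Γ', fun i w => Quot.mk r ⟨i, w⟩, fun i => ⟨fun w => rfl, ?_, ?_⟩⟩
  · intro v w hvw
    exact ⟨i, v, w, hvw, rfl, rfl⟩
  · rintro w q' ⟨j, x, y, hxy, hq, rfl⟩
    have heq : Relation.EqvGen r ⟨i, w⟩ ⟨j, x⟩ := Quot.eq.mp hq
    obtain ⟨_, h1, _⟩ := key _ _ heq
    obtain ⟨w₂, hw₂, he⟩ := h1 y hxy
    exact ⟨w₂, hw₂, Quot.eq.mpr he⟩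
end

section
/- Every complex K in the class T_n admits a simplicial map to the n-simplex Δⁿ that is injective on each simplex of K, and this map is unique up to composing with a permutation of the vertices of Δⁿ when K contains at least one n-simplex glued to another along an (n−1)-face. -/
/-- `IsTn n S` : the finset `S` of `n`-simplices (each a finset of `n+1` vertices)
forms a complex in the class `𝒯ₙ`: the smallest class of `n`-dimensional complexes
containing the `n`-simplex and closed under gluing two members along an
`(n-1)`-simplex.  Equivalently, the complex is built by starting from one
`n`-simplex and repeatedly gluing a fresh `n`-simplex along an `(n-1)`-face of
the complex built so far (the opposite vertex being new). -/
inductive IsTn {V : Type} [DecidableEq V] (n : ℕ) : Finset (Finset V) → Prop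
  | single (s : Finset V) (h : s.card = n + 1) : IsTn n {s}
  | glue (S : Finset (Finset V)) (s f : Finset V) (v : V) :
      IsTn n S → s ∈ S → f ⊆ s → f.card = n → (∀ t ∈ S, v ∉ t) →
      IsTn n (insert (insert v f) S)

/-- The 1-skeleton of the complex with set of maximal simplices `S`. -/
def skeleton {V : Type} [DecidableEq V] (S : Finset (Finset V)) : SimpleGraph V where
  Adj v w := v ≠ w ∧ ∃ s ∈ S, v ∈ s ∧ w ∈ s
  symm := by
    constructor
    rintro v w ⟨h, s, hs, hv, hw⟩
    exact ⟨Ne.symm h, s, hs, hw, hv⟩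
  loopless := by constructor; rintro v ⟨h, -⟩; exact h rfl

/-- `f` is (the spine of) a piece of the complex `S`: an `(n-1)`-simplex which is a
face of at least two `n`-simplices. -/
def IsPiece {V : Type} [DecidableEq V] (S : Finset (Finset V)) (n : ℕ) (f : Finset V) : Prop :=
  f.card = n ∧ 2 ≤ (S.filter (fun s => f ⊆ s)).card

instance {V : Type} [DecidableEq V] (S : Finset (Finset V)) (n : ℕ) :
    DecidablePred (IsPiece S n) := fun f =>
  decidable_of_iff (f.card = n ∧ 2 ≤ (S.filter (fun s => f ⊆ s)).card) Iff.rfl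

/-!
Labelings injective on simplices are built and compared along the gluing construction of
`IsTn`. When a fresh simplex `insert v f` is glued along the `(n-1)`-face `f`, the `n` labels
of `f` leave exactly one of the `n + 1` labels free, and `v` must receive it. So a labeling
always extends, and two labelings that differ by a permutation on the old complex still
differ by the same permutation after the gluing; on the initial simplex any two injective
labelings differ by a permutation.
-/

open Finset Function Set

section Labeling

variable {V α : Type*}

theorem Finset.exists_injOn_of_card_le [Fintype α] [Nonempty α] {s : Finset V}
    (h : #s ≤ Fintype.card α) : ∃ ℓ : V → α, InjOn ℓ s := by
  classical
  obtain ⟨e⟩ := Embedding.nonempty_of_card_le (α := s) (β := α) (by simpa using h)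
  refine ⟨fun w => if hw : w ∈ s then e ⟨w, hw⟩ else Classical.arbitrary α, ?_⟩
  intro a ha b hb hab
  simp only [Finset.mem_coe] at ha hb
  simp only [dif_pos ha, dif_pos hb] at hab
  exact congrArg Subtype.val (e.injective hab)

theorem Finset.exists_notMem_image_of_card_lt [Fintype α] (ℓ : V → α) {f : Finset V}
    (h : #f < Fintype.card α) : ∃ c, c ∉ ℓ '' f := by
  classical
  obtain ⟨c, -, hc⟩ := exists_mem_notMem_of_card_lt_card (s := f.image ℓ) (t := univ)
    (card_image_le.trans_lt (by rwa [card_univ]))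
  exact ⟨c, by simpa using hc⟩

theorem Finset.eq_of_notMem_of_card_add_one_eq [Fintype α] [DecidableEq α] {t : Finset α}
    (ht : #t + 1 = Fintype.card α) {a b : α} (ha : a ∉ t) (hb : b ∉ t) : a = b :=
  Finset.card_le_one_iff.mp (by rw [card_compl]; omega) (mem_compl.2 ha) (mem_compl.2 hb)

theorem Set.eqOn_update_of_notMem [DecidableEq V] {t : Set V} {v : V} (hv : v ∉ t)
    (ℓ : V → α) (c : α) : EqOn ℓ (update ℓ v c) t :=
  fun _ hw => (update_of_ne (ne_of_mem_of_not_mem hw hv) c ℓ).symm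

theorem Set.InjOn.update_insert [DecidableEq V] {ℓ : V → α} {t : Set V} {v : V} {c : α}
    (hℓ : InjOn ℓ t) (hv : v ∉ t) (hc : c ∉ ℓ '' t) : InjOn (update ℓ v c) (insert v t) := by
  have heq := eqOn_update_of_notMem hv ℓ c
  rw [injOn_insert hv, update_self, ← heq.image_eq]
  exact ⟨hℓ.congr heq, hc⟩

theorem Equiv.Perm.exists_apply_eq_of_injOn {s : Finset V} {ℓ ℓ' : V → α}
    (hℓ : InjOn ℓ s) (hℓ' : InjOn ℓ' s) : ∃ σ : Equiv.Perm α, ∀ v ∈ s, ℓ' v = σ (ℓ v) := by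
  obtain ⟨σ, hσ⟩ := Perm.exists_extending_pair (fun w : s => ℓ w) (fun w : s => ℓ' w)
    (fun a b h => Subtype.ext (hℓ a.2 b.2 h)) (fun a b h => Subtype.ext (hℓ' a.2 b.2 h))
  exact ⟨σ, fun v hv => (hσ ⟨v, hv⟩).symm⟩

theorem apply_eq_perm_apply_of_injOn_insert [Fintype α] [DecidableEq V] {ℓ ℓ' : V → α}
    {σ : Equiv.Perm α} {f : Finset V} {v : V} (hf : #f + 1 = Fintype.card α) (hv : v ∉ f)
    (hℓ : InjOn ℓ ↑(insert v f)) (hℓ' : InjOn ℓ' ↑(insert v f))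
    (hσ : ∀ w ∈ f, ℓ' w = σ (ℓ w)) : ℓ' v = σ (ℓ v) := by
  classical
  rw [coe_insert, injOn_insert (mem_coe.not.2 hv)] at hℓ hℓ'
  have hcard : #(f.image ℓ') + 1 = Fintype.card α := by
    rw [card_image_of_injOn hℓ'.1, hf]
  refine eq_of_notMem_of_card_add_one_eq hcard (by simpa using hℓ'.2) ?_
  rw [Finset.mem_image]
  rintro ⟨w, hw, hwv⟩
  rw [hσ w hw, σ.apply_eq_iff_eq] at hwv
  exact hℓ.2 ⟨w, hw, hwv⟩

end Labeling

namespace IsTn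

variable {V : Type} [DecidableEq V] {n : ℕ} {S : Finset (Finset V)}

theorem exists_injOn_labeling (hS : IsTn n S) :
    ∃ ℓ : V → Fin (n + 1), ∀ s ∈ S, InjOn ℓ s := by
  induction hS with
  | single s hcard =>
    obtain ⟨ℓ, hℓ⟩ := exists_injOn_of_card_le (α := Fin (n + 1)) (s := s) (by simp [hcard])
    exact ⟨ℓ, by simpa using hℓ⟩
  | glue S s f v _ hs hfs hf hv ih =>
    obtain ⟨ℓ, hℓ⟩ := ih
    have hvf : v ∉ (f : Set V) := fun h => hv s hs (hfs h)
    obtain ⟨c, hc⟩ := exists_notMem_image_of_card_lt ℓ (f := f) (α := Fin (n + 1)) (by simp [hf])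
    refine ⟨update ℓ v c, forall_mem_insert _ _ _ |>.2 ⟨?_, fun t ht => ?_⟩⟩
    · rw [coe_insert]
      exact ((hℓ s hs).mono (coe_subset.2 hfs)).update_insert hvf hc
    · exact (hℓ t ht).congr (eqOn_update_of_notMem (hv t ht) ℓ c)

theorem exists_perm_of_injOn (hS : IsTn n S) {ℓ ℓ' : V → Fin (n + 1)}
    (hℓ : ∀ s ∈ S, InjOn ℓ s) (hℓ' : ∀ s ∈ S, InjOn ℓ' s) :
    ∃ σ : Equiv.Perm (Fin (n + 1)), ∀ v ∈ S.biUnion id, ℓ' v = σ (ℓ v) := by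
  induction hS with
  | single s _ =>
    simpa using Equiv.Perm.exists_apply_eq_of_injOn (hℓ s (mem_singleton_self s))
      (hℓ' s (mem_singleton_self s))
  | glue S s f v _ hs hfs hf hv ih =>
    obtain ⟨σ, hσ⟩ := ih (fun t ht => hℓ t (mem_insert_of_mem ht))
      (fun t ht => hℓ' t (mem_insert_of_mem ht))
    have hσf : ∀ w ∈ f, ℓ' w = σ (ℓ w) := fun w hw => hσ w (mem_biUnion.2 ⟨s, hs, hfs hw⟩)
    have hσv : ℓ' v = σ (ℓ v) :=
      apply_eq_perm_apply_of_injOn_insert (by simp [hf]) (fun h => hv s hs (hfs h))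
        (hℓ _ (mem_insert_self _ _)) (hℓ' _ (mem_insert_self _ _)) hσf
    refine ⟨σ, fun w hw => ?_⟩
    rw [Finset.biUnion_insert, Finset.mem_union, id, Finset.mem_insert] at hw
    rcases hw with (rfl | hwf) | hwS
    · exact hσv
    · exact hσf w hwf
    · exact hσ w hwS

end IsTn

/-- every complex `K ∈ 𝒯ₙ` admits a simplicial map to the `n`-simplex
(i.e. a labeling of its vertices by `{1, …, n+1}`) injective on each simplex,
and this map is unique up to a permutation of the vertices of `Δⁿ` (on the vertices
of the complex) when `K` contains two `n`-simplices glued along an `(n-1)`-face. -/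
theorem exists_unique_simplicial_map_to_simplex {V : Type} [DecidableEq V] {n : ℕ}
    {S : Finset (Finset V)} (hS : IsTn n S) :
    (∃ ℓ : V → Fin (n + 1), ∀ s ∈ S, Set.InjOn ℓ ↑s) ∧
    (∀ ℓ ℓ' : V → Fin (n + 1),
      (∀ s ∈ S, Set.InjOn ℓ ↑s) → (∀ s ∈ S, Set.InjOn ℓ' ↑s) →
      (∃ s ∈ S, ∃ t ∈ S, s ≠ t ∧ (s ∩ t).card = n) →
      ∃ σ : Equiv.Perm (Fin (n + 1)), ∀ v ∈ S.biUnion id, ℓ' v = σ (ℓ v)) :=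
  ⟨hS.exists_injOn_labeling, fun _ _ hℓ hℓ' _ => hS.exists_perm_of_injOn hℓ hℓ'⟩
end

section
/- If K ∈ T_n and the labeling of Γ(K) uses fewer than n+1 of the p-colors, then the right-angled Artin group A_K is reducible, i.e., A_K ≅ Z × A_{K'} for some K' ∈ T_{n−1}. Conversely, if K has a vertex adjacent to all other vertices, then K is the cone on some K' ∈ T_{n−1} and A_K ≅ Z × A_{K'}. -/
/-- The commutator relations of a right-angled Artin group on a graph `G`. -/
def raagRels {V : Type} (G : SimpleGraph V) : Set (FreeGroup V) :=
  {r | ∃ v w, G.Adj v w ∧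
    r = FreeGroup.of v * FreeGroup.of w * (FreeGroup.of v)⁻¹ * (FreeGroup.of w)⁻¹}

/-- The right-angled Artin group of a graph `G`: generators are vertices, with a
commuting relation for each pair of adjacent vertices. -/
abbrev RAAG {V : Type} (G : SimpleGraph V) : Type := PresentedGroup (raagRels G)

/-- The right-angled Artin group `A_K` of the complex with maximal simplices `S`:
the RAAG on the 1-skeleton, with generators the vertices of the complex. -/
abbrev raagOfComplex {V : Type} [DecidableEq V] (S : Finset (Finset V)) : Type :=
  RAAG ((skeleton S).induce {v : V | v ∈ S.biUnion id})

namespace RAAG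

variable {V W H : Type} {G : SimpleGraph V} [Group H]

theorem commute_of_adj {u w : V} (h : G.Adj u w) :
    Commute (PresentedGroup.of u : RAAG G) (PresentedGroup.of w) := by
  rw [← commutatorElement_eq_one_iff_commute, commutatorElement_def]
  exact (QuotientGroup.eq_one_iff _).mpr (Subgroup.subset_normalClosure ⟨u, w, h, rfl⟩)

def lift (f : V → H) (hf : ∀ u w, G.Adj u w → Commute (f u) (f w)) : RAAG G →* H :=
  PresentedGroup.toGroup <| by
    rintro _ ⟨u, w, huw, rfl⟩
    simpa [commutatorElement_def] using commutatorElement_eq_one_iff_commute.mpr (hf u w huw)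

@[simp]
theorem lift_of (f : V → H) (hf : ∀ u w, G.Adj u w → Commute (f u) (f w)) (v : V) :
    lift f hf (PresentedGroup.of v) = f v :=
  PresentedGroup.toGroup.of _

theorem commute_of_forall_commute_of {c : H} (ψ : RAAG G →* H)
    (hc : ∀ v, Commute c (ψ (PresentedGroup.of v))) (g : RAAG G) : Commute c (ψ g) := by
  have hconj : (MulAut.conj c).toMonoidHom.comp ψ = ψ :=
    PresentedGroup.ext fun v => by simpa [mul_inv_eq_iff_eq_mul] using (hc v).eq
  show c * ψ g = ψ g * c
  simpa [mul_inv_eq_iff_eq_mul] using DFunLike.congr_fun hconj g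

variable [DecidableEq V] {G' : SimpleGraph W}

noncomputable def coneEquiv (v₀ : V) (hv₀ : ∀ v, v ≠ v₀ → G.Adj v₀ v)
    (e : G' ≃g G.induce {v₀}ᶜ) : RAAG G ≃* Multiplicative ℤ × RAAG G' := by
  let f : V → Multiplicative ℤ × RAAG G' := fun v =>
    if h : v = v₀ then (Multiplicative.ofAdd 1, 1) else (1, PresentedGroup.of (e.symm ⟨v, h⟩))
  have hf : ∀ u w, G.Adj u w → Commute (f u) (f w) := by
    intro u w huw
    by_cases hu : u = v₀ <;> by_cases hw : w = v₀
    · exact absurd (hu.trans hw.symm) huw.ne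
    · simp [f, hu, hw, Commute, SemiconjBy]
    · simp [f, hu, hw, Commute, SemiconjBy]
    · have : G'.Adj (e.symm ⟨u, hu⟩) (e.symm ⟨w, hw⟩) := e.symm.map_adj_iff.mpr huw
      simpa [f, hu, hw, Commute, SemiconjBy] using commute_of_adj this
  let c : RAAG G := PresentedGroup.of v₀
  let ψ₂ : RAAG G' →* RAAG G := lift (fun a => PresentedGroup.of (e a : V))
    fun a b hab => commute_of_adj (e.map_adj_iff.mpr hab)
  have hc : ∀ b, Commute c (ψ₂ b) := commute_of_forall_commute_of ψ₂ fun a => by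
    simpa [ψ₂] using commute_of_adj (hv₀ _ (e a).2)
  let φ := lift f hf
  let ψ := (zpowersHom _ c).noncommCoprod ψ₂ fun z b => (hc b).zpow_left _
  have hψ : ∀ z b, ψ (z, b) = c ^ z.toAdd * ψ₂ b := fun _ _ => rfl
  have hφc : φ c = (Multiplicative.ofAdd 1, 1) := by simp [φ, c, f]
  have hφψ₂ : ∀ b, φ (ψ₂ b) = (1, b) := by
    refine DFunLike.congr_fun (?_ : φ.comp ψ₂ = MonoidHom.inr _ _)
    exact PresentedGroup.ext fun a => by
      simp [φ, ψ₂, f, dif_neg (show (e a : V) ≠ v₀ from (e a).2)]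
  refine MonoidHom.toMulEquiv φ ψ (PresentedGroup.ext fun v => ?_) ?_
  · by_cases hv : v = v₀
    · subst hv; simp [φ, f, hψ, c]
    · simp [φ, f, hv, hψ, ψ₂]
  · ext ⟨z, b⟩ <;> simp [hψ, hφc, hφψ₂]

end RAAG

section Complex

variable {V : Type} [DecidableEq V]

theorem skeleton_mono {S T : Finset (Finset V)} (h : S ⊆ T) {u w : V}
    (huw : (skeleton S).Adj u w) : (skeleton T).Adj u w :=
  let ⟨hne, s, hs, hu, hw⟩ := huw
  ⟨hne, s, h hs, hu, hw⟩

theorem skeleton_insert_insert_adj_iff {S : Finset (Finset V)} {s f : Finset V} {v u w : V}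
    (hs : s ∈ S) (hf : f ⊆ s) (hu : u ≠ v) (hw : w ≠ v) :
    (skeleton (insert (insert v f) S)).Adj u w ↔ (skeleton S).Adj u w := by
  refine ⟨fun ⟨hne, t, ht, hut, hwt⟩ => ?_, skeleton_mono (Finset.subset_insert _ _)⟩
  rcases Finset.mem_insert.mp ht with rfl | ht
  · exact ⟨hne, s, hs, hf ((Finset.mem_insert.mp hut).resolve_left hu),
      hf ((Finset.mem_insert.mp hwt).resolve_left hw)⟩
  · exact ⟨hne, t, ht, hut, hwt⟩

theorem mem_insert_of_skeleton_adj_fresh {S : Finset (Finset V)} {f : Finset V} {v u : V}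
    (hv : ∀ t ∈ S, v ∉ t) (h : (skeleton (insert (insert v f) S)).Adj u v) :
    u ∈ insert v f := by
  obtain ⟨-, t, ht, hut, hvt⟩ := h
  rcases Finset.mem_insert.mp ht with rfl | ht
  · exact hut
  · exact absurd hvt (hv t ht)

theorem IsPiece.mono {S T : Finset (Finset V)} {n : ℕ} {f : Finset V} (h : S ⊆ T)
    (hf : IsPiece S n f) : IsPiece T n f :=
  ⟨hf.1, hf.2.trans (Finset.card_le_card (Finset.filter_subset_filter _ h))⟩

theorem isPiece_insert_insert {S : Finset (Finset V)} {n : ℕ} {s f : Finset V} {v : V}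
    (hs : s ∈ S) (hf : f ⊆ s) (hcard : f.card = n) (hv : v ∉ s) :
    IsPiece (insert (insert v f) S) n f := by
  refine ⟨hcard, ?_⟩
  have hne : insert v f ≠ s := fun h => hv (h ▸ Finset.mem_insert_self v f)
  calc 2 = ({insert v f, s} : Finset (Finset V)).card := (Finset.card_pair hne).symm
    _ ≤ _ := Finset.card_le_card fun t ht => by
      rcases Finset.mem_insert.mp ht with rfl | ht
      · exact Finset.mem_filter.mpr ⟨Finset.mem_insert_self _ _, Finset.subset_insert _ _⟩
      · rw [Finset.mem_singleton.mp ht]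
        exact Finset.mem_filter.mpr ⟨Finset.mem_insert_of_mem hs, hf⟩

theorem mem_biUnion_image_erase_iff {S : Finset (Finset V)} {v₀ w : V} :
    w ∈ (S.image (·.erase v₀)).biUnion id ↔ w ∈ S.biUnion id ∧ w ≠ v₀ := by
  simp only [Finset.mem_biUnion, Finset.mem_image, id, exists_exists_and_eq_and,
    Finset.mem_erase]
  tauto

theorem skeleton_image_erase_adj_iff {S : Finset (Finset V)} {v₀ u w : V} (hu : u ≠ v₀)
    (hw : w ≠ v₀) : (skeleton (S.image (·.erase v₀))).Adj u w ↔ (skeleton S).Adj u w := by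
  simp only [skeleton, Finset.exists_mem_image, Finset.mem_erase]
  tauto

theorem image_insert_image_erase {S : Finset (Finset V)} {v₀ : V} (h : ∀ s ∈ S, v₀ ∈ s) :
    (S.image (·.erase v₀)).image (insert v₀) = S := by
  rw [Finset.image_image]
  exact (Finset.image_congr fun s hs => Finset.insert_erase (h s hs)).trans Finset.image_id

noncomputable def raagOfComplexConeEquiv (S : Finset (Finset V)) {v₀ : V}
    (hv₀ : v₀ ∈ S.biUnion id) (h : ∀ s ∈ S, v₀ ∈ s) :
    raagOfComplex S ≃* Multiplicative ℤ × raagOfComplex (S.image (·.erase v₀)) :=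
  have hne : ∀ {w : V}, w ∈ (S.image (·.erase v₀)).biUnion id → w ≠ v₀ := fun hw =>
    (mem_biUnion_image_erase_iff.mp hw).2
  RAAG.coneEquiv ⟨v₀, hv₀⟩
    (fun w hw => by
      obtain ⟨s, hs, hws⟩ := Finset.mem_biUnion.mp w.2
      exact ⟨fun h => hw (Subtype.ext h).symm, s, hs, h s hs, hws⟩)
    { toFun := fun w => ⟨⟨w, (mem_biUnion_image_erase_iff.mp w.2).1⟩,
        fun h => hne w.2 (congrArg Subtype.val h)⟩
      invFun := fun w => ⟨w.1.1, mem_biUnion_image_erase_iff.mpr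
        ⟨w.1.2, fun h => w.2 (Subtype.ext h)⟩⟩
      left_inv := fun _ => rfl
      right_inv := fun _ => rfl
      map_rel_iff' := fun {a b} => (skeleton_image_erase_adj_iff (hne a.2) (hne b.2)).symm }

end Complex

namespace IsTn

variable {V : Type} [DecidableEq V] {n : ℕ} {S : Finset (Finset V)}

theorem card_eq (hS : IsTn n S) {s : Finset V} (hs : s ∈ S) : s.card = n + 1 := by
  induction hS with
  | single s h => rwa [Finset.mem_singleton.mp hs]
  | glue S s f v _ hsS hfs hf hv ih =>
    rcases Finset.mem_insert.mp hs with rfl | hs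
    · rw [Finset.card_insert_of_notMem fun h => hv s hsS (hfs h), hf]
    · exact ih hs

theorem nonempty (hS : IsTn n S) : S.Nonempty := by
  cases hS with
  | single s _ => exact Finset.singleton_nonempty s
  | glue S s f v => exact Finset.insert_nonempty _ _

theorem image_erase (hn : 1 ≤ n) (hS : IsTn n S) {v₀ : V} (h : ∀ s ∈ S, v₀ ∈ s) :
    IsTn (n - 1) (S.image (·.erase v₀)) := by
  induction hS with
  | single s hs =>
    rw [Finset.image_singleton]
    refine single _ ?_
    rw [Finset.card_erase_of_mem (h s (Finset.mem_singleton_self s)), hs]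
    omega
  | glue S s f v _ hsS hfs hf hv ih =>
    have hS : ∀ t ∈ S, v₀ ∈ t := fun t ht => h t (Finset.mem_insert_of_mem ht)
    have hvv₀ : v ≠ v₀ := fun hvv₀ => hv s hsS (hvv₀ ▸ hS s hsS)
    have hv₀f : v₀ ∈ f :=
      (Finset.mem_insert.mp (h _ (Finset.mem_insert_self _ _))).resolve_left hvv₀.symm
    rw [Finset.image_insert, Finset.erase_insert_of_ne hvv₀]
    refine glue _ (s.erase v₀) (f.erase v₀) v (ih hS) (Finset.mem_image_of_mem _ hsS)
      (Finset.erase_subset_erase _ hfs) (by rw [Finset.card_erase_of_mem hv₀f, hf]) ?_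
    simp only [Finset.forall_mem_image]
    exact fun t ht hvt => hv t ht (Finset.mem_of_mem_erase hvt)

theorem forall_mem_of_forall_adj (hS : IsTn n S) {v₀ : V} (hv₀ : v₀ ∈ S.biUnion id)
    (hadj : ∀ w ∈ S.biUnion id, w ≠ v₀ → (skeleton S).Adj v₀ w) :
    ∀ s ∈ S, v₀ ∈ s := by
  induction hS with
  | single s _ => simpa using hv₀
  | glue S s f v hS hsS hfs hf hv ih =>
    have hvert : ∀ {w}, w ∈ S.biUnion id → w ∈ (insert (insert v f) S).biUnion id :=
      fun hw => Finset.biUnion_subset_biUnion_of_subset_left _ (Finset.subset_insert _ _) hw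
    have hv_vert : v ∈ (insert (insert v f) S).biUnion id :=
      Finset.mem_biUnion.mpr ⟨_, Finset.mem_insert_self _ _, Finset.mem_insert_self _ _⟩
    have hv₀v : v₀ ≠ v := by
      rintro rfl
      suffices s ⊆ f by
        have := Finset.card_le_card this
        rw [hS.card_eq hsS, hf] at this
        omega
      intro w hw
      have hwv : w ≠ v₀ := fun h => hv s hsS (h ▸ hw)
      have := mem_insert_of_skeleton_adj_fresh hv
        (hadj w (hvert (Finset.mem_biUnion.mpr ⟨s, hsS, hw⟩)) hwv).symm
      exact (Finset.mem_insert.mp this).resolve_left hwv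
    have hv₀f : v₀ ∈ f := (Finset.mem_insert.mp (mem_insert_of_skeleton_adj_fresh hv
      (hadj v hv_vert hv₀v.symm))).resolve_left hv₀v
    have hall := ih (Finset.mem_biUnion.mpr ⟨s, hsS, hfs hv₀f⟩) fun w hw hwv₀ =>
      have hwv : w ≠ v := fun h => by
        obtain ⟨t, ht, hwt⟩ := Finset.mem_biUnion.mp hw
        exact hv t ht (h ▸ hwt)
      (skeleton_insert_insert_adj_iff hsS hfs hv₀v hwv).mp (hadj w (hvert hw) hwv₀)
    intro t ht
    rcases Finset.mem_insert.mp ht with rfl | ht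
    · exact Finset.mem_insert_of_mem hv₀f
    · exact hall t ht

theorem exists_forall_mem_of_missing_color (hS : IsTn n S) (ℓ : V → Fin (n + 1))
    (hℓ : ∀ s ∈ S, Set.InjOn ℓ ↑s) (i : Fin (n + 1))
    (hi : ∀ s ∈ S, ∀ f ⊆ s, IsPiece S n f → ∀ v ∈ s, v ∉ f → ℓ v ≠ i) :
    ∃ v₀, (∀ s ∈ S, v₀ ∈ s) ∧ ℓ v₀ = i := by
  induction hS with
  | single s hs =>
    have hsurj : s.image ℓ = Finset.univ := Finset.eq_univ_of_card _ <| by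
      rw [Finset.card_image_of_injOn (hℓ s (Finset.mem_singleton_self s)), hs, Fintype.card_fin]
    obtain ⟨v₀, hv₀, hℓv₀⟩ := Finset.mem_image.mp (hsurj ▸ Finset.mem_univ i)
    exact ⟨v₀, fun t ht => Finset.mem_singleton.mp ht ▸ hv₀, hℓv₀⟩
  | glue S s f v _ hsS hfs hf hv ih =>
    have hsub := Finset.subset_insert (insert v f) S
    obtain ⟨v₀, hall, hℓv₀⟩ := ih (fun t ht => hℓ t (hsub ht))
      fun t ht f' hf' hpiece => hi t (hsub ht) f' hf' (hpiece.mono hsub)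
    have hv₀f : v₀ ∈ f := by
      by_contra hv₀f
      exact hi s (hsub hsS) f hfs (isPiece_insert_insert hsS hfs hf (hv s hsS)) v₀ (hall s hsS)
        hv₀f hℓv₀
    refine ⟨v₀, fun t ht => ?_, hℓv₀⟩
    rcases Finset.mem_insert.mp ht with rfl | ht
    · exact Finset.mem_insert_of_mem hv₀f
    · exact hall t ht

theorem exists_eq_cone (hn : 1 ≤ n) (hS : IsTn n S) {v₀ : V} (h : ∀ s ∈ S, v₀ ∈ s) :
    ∃ S' : Finset (Finset V), IsTn (n - 1) S' ∧ S = S'.image (insert v₀) ∧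
      Nonempty (raagOfComplex S ≃* Multiplicative ℤ × raagOfComplex S') := by
  obtain ⟨s, hs⟩ := hS.nonempty
  refine ⟨S.image (·.erase v₀), hS.image_erase hn h, (image_insert_image_erase h).symm, ?_⟩
  exact ⟨raagOfComplexConeEquiv S (Finset.mem_biUnion.mpr ⟨s, hs, h s hs⟩) h⟩

end IsTn

/-- (1) if `K ∈ 𝒯ₙ` and the labeling uses fewer than `n+1` of the
p-colors (some color `i` is never the off-spine color of a piece), then `A_K` is
reducible: `A_K ≅ ℤ × A_{K'}` for some `K' ∈ 𝒯ₙ₋₁`; (2) conversely, if `K` has a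
vertex adjacent to all other vertices, then `K` is the cone on some `K' ∈ 𝒯ₙ₋₁` and
`A_K ≅ ℤ × A_{K'}`. -/
theorem reducible_iff_missing_color {V : Type} [DecidableEq V] {n : ℕ} (hn : 1 ≤ n)
    {S : Finset (Finset V)} (hS : IsTn n S)
    (ℓ : V → Fin (n + 1)) (hℓ : ∀ s ∈ S, Set.InjOn ℓ ↑s) :
    ((∃ i : Fin (n + 1), ∀ s ∈ S, ∀ f ⊆ s, IsPiece S n f →
        ∀ v ∈ s, v ∉ f → ℓ v ≠ i) →
      ∃ (W : Type) (_ : DecidableEq W) (S' : Finset (Finset W)), IsTn (n - 1) S' ∧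
        Nonempty (raagOfComplex S ≃* Multiplicative ℤ × raagOfComplex S')) ∧
    (∀ v₀ ∈ S.biUnion id, (∀ w ∈ S.biUnion id, w ≠ v₀ → (skeleton S).Adj v₀ w) →
      ∃ S' : Finset (Finset V), IsTn (n - 1) S' ∧ S = S'.image (insert v₀) ∧
        Nonempty (raagOfComplex S ≃* Multiplicative ℤ × raagOfComplex S')) := by
  refine ⟨fun ⟨i, hi⟩ => ?_, fun v₀ hv₀ hadj => ?_⟩
  · obtain ⟨v₀, hv₀, -⟩ := hS.exists_forall_mem_of_missing_color ℓ hℓ i hi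
    obtain ⟨S', hS', -, hiso⟩ := hS.exists_eq_cone hn hv₀
    exact ⟨V, inferInstance, S', hS', hiso⟩
  · exact hS.exists_eq_cone hn (hS.forall_mem_of_forall_adj hv₀ hadj)
end

section
/- A star graph consisting of one f-vertex joined to n+1 p-vertices of distinct colors 1, ..., n+1 is minimal with respect to weak coverings: any weak covering from it to a connected colored graph is an isomorphism. -/
/-- A weak covering of colored simple graphs: a color-preserving graph homomorphism
such that every edge at the image of a vertex lifts to an edge at that vertex. -/
def SWeakCovering {A B C : Type} (G : SimpleGraph A) (cA : A → C)
    (H : SimpleGraph B) (cB : B → C) (f : A → B) : Prop :=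
  (∀ a, cB (f a) = cA a) ∧
  (∀ ⦃a a'⦄, G.Adj a a' → H.Adj (f a) (f a')) ∧
  (∀ a b, H.Adj (f a) b → ∃ a', G.Adj a a' ∧ f a' = b)

/-- The star graph: one central f-vertex (`none`) joined to `n+1` leaves (`some i`),
one of each p-color `i ∈ {1, …, n+1}`; the coloring is the identity on
`Option (Fin (n+1))` (with `none` the f-color). -/
def starGraph (n : ℕ) : SimpleGraph (Option (Fin (n + 1))) where
  Adj a b := (a = none ∧ b ≠ none) ∨ (b = none ∧ a ≠ none)
  symm := by tauto
  loopless := ⟨by rintro a (⟨h1, h2⟩ | ⟨h1, h2⟩) <;> exact h2 h1⟩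

/-!
The star has pairwise distinct vertex colors, so any color-preserving map out of it is
injective. The lifting property carries walks in the target back to the star, so a weak
covering onto a connected graph is surjective. Finally, for an injective weak covering an
edge between two images lifts to an edge whose endpoint is forced to be the expected
preimage, so adjacency is reflected.
-/

namespace SWeakCovering

variable {A B C : Type} {G : SimpleGraph A} {cA : A → C} {H : SimpleGraph B} {cB : B → C}
  {f : A → B}

theorem injective (hf : SWeakCovering G cA H cB f) (hcA : cA.Injective) : f.Injective :=
  fun a a' h => hcA <| by rw [← hf.1 a, ← hf.1 a', h]

theorem mem_range_of_reachable (hf : SWeakCovering G cA H cB f) {u v : B}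
    (huv : H.Reachable u v) (hu : u ∈ Set.range f) : v ∈ Set.range f := by
  obtain ⟨w⟩ := huv
  induction w with
  | nil => exact hu
  | cons hadj _ ih =>
    obtain ⟨a, rfl⟩ := hu
    obtain ⟨a', -, ha'⟩ := hf.2.2 a _ hadj
    exact ih ⟨a', ha'⟩

theorem surjective [Nonempty A] (hf : SWeakCovering G cA H cB f) (hH : H.Connected) :
    f.Surjective := fun b =>
  let a := Classical.arbitrary A
  hf.mem_range_of_reachable (hH (f a) b) ⟨a, rfl⟩

theorem adj_iff (hf : SWeakCovering G cA H cB f) (hinj : f.Injective) {a a' : A} :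
    G.Adj a a' ↔ H.Adj (f a) (f a') := by
  refine ⟨fun h => hf.2.1 h, fun h => ?_⟩
  obtain ⟨a'', hadj, heq⟩ := hf.2.2 a _ h
  rwa [← hinj heq]

end SWeakCovering

/-- the star (one f-vertex joined to `n+1` p-vertices of distinct colors)
is minimal with respect to weak coverings: any weak covering from it to a connected
colored graph is an isomorphism. -/
theorem star_minimal {n : ℕ} {B : Type} (H : SimpleGraph B) (c : B → Option (Fin (n + 1)))
    (hconn : H.Connected) (g : Option (Fin (n + 1)) → B)
    (hg : SWeakCovering (starGraph n) id H c g) :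
    Function.Bijective g ∧ ∀ v w, (starGraph n).Adj v w ↔ H.Adj (g v) (g w) := by
  have hinj : g.Injective := hg.injective Function.injective_id
  exact ⟨⟨hinj, hg.surjective hconn⟩, fun _ _ => hg.adj_iff hinj⟩
end
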